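/- Consider sl(2,ℂ)⊕sl(2,ℂ) with standard bases J₁,J₂,J₃ and L₁,L₂,L₃ satisfying [J_a,J_b] = ε_{abc} J_c (and similarly for L, with [J_a, L_b]=0), where ε is interpreted via the complexified so(3) relations [J₁,J₂]=J₃ etc. Then s₊ := span_ℂ{J₃ + i L₃, J₁ + i J₂, L₁ + i L₂} and s₋ := span_ℂ{J₃ − i L₃, J₁ − i J₂, L₁ − i L₂} are solvable Lie subalgebras with s₊ ⊕ s₋ = sl(2,ℂ) ⊕ sl(2,ℂ) as vector spaces. -/

import Mathlib

/-!
Each of `s₊`, `s₋` is spanned by `h, e, f` (`h = J₃ ± iL₃`, `e = J₁ ± iJ₂`, `f = L₁ ± iL₂`) where,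
because `(±i)² = -1`, `e` and `f` are eigenvectors of `ad h` and `[e, f] = 0`. So the derived
algebra lies in the abelian span of `e, f`, and the subalgebra is solvable of length at most 2.
Adding and subtracting corresponding generators of `s₊` and `s₋` recovers every `J_a` and `L_a`,
so `s₊ + s₋` is the whole 6-dimensional algebra; as both have dimension at most 3, the sum is
direct.
-/

open Submodule

section SpanLie

variable {R L : Type*} [CommRing R] [LieRing L] [LieAlgebra R L]

theorem lie_mem_of_mem_span {s : Set L} {p : Submodule R L}
    (h : ∀ x ∈ s, ∀ y ∈ s, ⁅x, y⁆ ∈ p) {x y : L} (hx : x ∈ span R s) (hy : y ∈ span R s) :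
    ⁅x, y⁆ ∈ p := by
  have hle : map₂ (LieModule.toEnd R L L : L →ₗ[R] Module.End R L) (span R s) (span R s) ≤ p := by
    rw [map₂_span_span, span_le]
    rintro _ ⟨a, ha, b, hb, rfl⟩
    exact h a ha b hb
  simpa using map₂_le.mp hle x hx y hy

theorem LieSubalgebra.isSolvable_of_lie_mem {S : LieSubalgebra R L} {A : Submodule R L}
    (hS : ∀ x ∈ S, ∀ y ∈ S, ⁅x, y⁆ ∈ A) (hA : ∀ x ∈ A, ∀ y ∈ A, ⁅x, y⁆ = 0) :
    LieAlgebra.IsSolvable S := by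
  have hD : ∀ z ∈ LieAlgebra.derivedSeries R S 1, (z : L) ∈ A := by
    intro z hz
    rw [LieAlgebra.derivedSeries_def, LieAlgebra.derivedSeriesOfIdeal_succ,
      LieAlgebra.derivedSeriesOfIdeal_zero, ← LieSubmodule.mem_toSubmodule,
      LieSubmodule.lieIdeal_oper_eq_linear_span] at hz
    refine span_le (p := A.comap S.toSubmodule.subtype) |>.mpr ?_ hz
    rintro _ ⟨x, y, rfl⟩
    exact hS _ (x : S).2 _ (y : S).2
  refine (LieAlgebra.isSolvable_iff R S).mpr ⟨2, ?_⟩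
  rw [LieAlgebra.derivedSeries_def, LieAlgebra.derivedSeriesOfIdeal_succ,
    ← LieAlgebra.derivedSeries_def, LieSubmodule.lie_eq_bot_iff]
  intro x hx y hy
  exact Subtype.ext (hA _ (hD x hx) _ (hD y hy))

end SpanLie

section SpanTriple

variable {R L : Type*} [CommRing R] [LieRing L] [LieAlgebra R L]
  {u v w : L} {α β : R}

theorem lie_eq_zero_of_mem_span_pair (hvw : ⁅v, w⁆ = 0) {x y : L}
    (hx : x ∈ span R {v, w}) (hy : y ∈ span R {v, w}) : ⁅x, y⁆ = 0 := by
  refine (mem_bot R).mp (lie_mem_of_mem_span ?_ hx hy)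
  simp only [Set.mem_insert_iff, Set.mem_singleton_iff, forall_eq_or_imp, forall_eq]
  simp [hvw, ← lie_skew w v]

variable (huv : ⁅u, v⁆ = α • v) (huw : ⁅u, w⁆ = β • w) (hvw : ⁅v, w⁆ = 0)
include huv huw hvw

theorem lie_mem_span_pair_of_mem_span_triple {x y : L}
    (hx : x ∈ span R {u, v, w}) (hy : y ∈ span R {u, v, w}) : ⁅x, y⁆ ∈ span R {v, w} := by
  have hv : v ∈ span R {v, w} := subset_span (by simp)
  have hw : w ∈ span R {v, w} := subset_span (by simp)
  refine lie_mem_of_mem_span ?_ hx hy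
  simp only [Set.mem_insert_iff, Set.mem_singleton_iff, forall_eq_or_imp, forall_eq]
  simp [huv, huw, hvw, ← lie_skew v u, ← lie_skew w u, ← lie_skew w v, smul_mem, hv, hw]

theorem lie_mem_span_triple {x y : L}
    (hx : x ∈ span R {u, v, w}) (hy : y ∈ span R {u, v, w}) : ⁅x, y⁆ ∈ span R {u, v, w} :=
  span_mono (Set.subset_insert u _)
    (lie_mem_span_pair_of_mem_span_triple huv huw hvw hx hy)

theorem LieSubalgebra.isSolvable_of_toSubmodule_eq_span_triple {S : LieSubalgebra R L}
    (hS : S.toSubmodule = span R {u, v, w}) : LieAlgebra.IsSolvable S :=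
  isSolvable_of_lie_mem (A := span R {v, w})
    (fun _ hx _ hy ↦ lie_mem_span_pair_of_mem_span_triple huv huw hvw
      (hS ▸ hx) (hS ▸ hy))
    (fun _ hx _ hy ↦ lie_eq_zero_of_mem_span_pair hvw hx hy)

end SpanTriple

theorem Submodule.mem_of_add_smul_mem_of_add_neg_smul_mem {K V : Type*} [Field K]
    [AddCommGroup V] [Module K V] {p : Submodule K V} {u v : V} {c : K}
    (hc : c ≠ 0) (h2 : (2 : K) ≠ 0) (hp : u + c • v ∈ p) (hm : u + (-c) • v ∈ p) :
    u ∈ p ∧ v ∈ p := by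
  have hu : (u + c • v) + (u + (-c) • v) = (2 : K) • u := by module
  have hv : (u + c • v) - (u + (-c) • v) = (2 * c) • v := by module
  exact ⟨(p.smul_mem_iff h2).mp (hu ▸ p.add_mem hp hm),
    (p.smul_mem_iff (mul_ne_zero h2 hc)).mp (hv ▸ p.sub_mem hp hm)⟩

theorem Submodule.inf_eq_bot_of_sup_eq_top {K V : Type*} [DivisionRing K] [AddCommGroup V]
    [Module K V] [FiniteDimensional K V] {p q : Submodule K V} (hpq : p ⊔ q = ⊤)
    (hdim : Module.finrank K p + Module.finrank K q ≤ Module.finrank K V) : p ⊓ q = ⊥ := by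
  have h := finrank_sup_add_finrank_inf_eq p q
  rw [hpq, finrank_top] at h
  exact finrank_eq_zero.mp (by omega)

section TriangularSpan

/-- The paper's `s₊` and `s₋` are `triangularSpan J L I` and `triangularSpan J L (-I)`. -/
def triangularSpan {R M : Type*} [Semiring R] [AddCommMonoid M] [Module R M]
    (J L : Fin 3 → M) (c : R) : Submodule R M :=
  span R {J 2 + c • L 2, J 0 + c • J 1, L 0 + c • L 1}

theorem finrank_triangularSpan_le {K V : Type*} [DivisionRing K] [AddCommGroup V] [Module K V]
    (J L : Fin 3 → V) (c : K) : Module.finrank K (triangularSpan J L c) ≤ 3 := by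
  classical
  exact (finrank_span_le_card _).trans (by simpa using Finset.card_le_three)

theorem span_range_union_le_triangularSpan_sup {K V : Type*} [Field K] [AddCommGroup V]
    [Module K V] (J L : Fin 3 → V) {c : K} (hc : c ≠ 0) (h2 : (2 : K) ≠ 0) :
    span K (Set.range J ∪ Set.range L) ≤ triangularSpan J L c ⊔ triangularSpan J L (-c) := by
  set p := triangularSpan J L c ⊔ triangularSpan J L (-c)
  have hp : ∀ x ∈ ({J 2 + c • L 2, J 0 + c • J 1, L 0 + c • L 1} : Set V), x ∈ p :=
    fun x hx ↦ mem_sup_left (subset_span hx)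
  have hm : ∀ x ∈ ({J 2 + (-c) • L 2, J 0 + (-c) • J 1, L 0 + (-c) • L 1} : Set V), x ∈ p :=
    fun x hx ↦ mem_sup_right (subset_span hx)
  obtain ⟨hJ2, hL2⟩ := mem_of_add_smul_mem_of_add_neg_smul_mem (u := J 2) (v := L 2) hc h2
    (hp _ (by simp)) (hm _ (by simp))
  obtain ⟨hJ0, hJ1⟩ := mem_of_add_smul_mem_of_add_neg_smul_mem (u := J 0) (v := J 1) hc h2
    (hp _ (by simp)) (hm _ (by simp))
  obtain ⟨hL0, hL1⟩ := mem_of_add_smul_mem_of_add_neg_smul_mem (u := L 0) (v := L 1) hc h2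
    (hp _ (by simp)) (hm _ (by simp))
  rw [span_le, Set.union_subset_iff, Set.range_subset_iff, Set.range_subset_iff]
  constructor <;> intro i <;> fin_cases i <;> assumption

end TriangularSpan

section TriangularSpanLie

variable {R g : Type*} [CommRing R] [LieRing g] [LieAlgebra R g] {J L : Fin 3 → g} {c : R}

theorem lie_triangularSpan_gen₀_gen₁ (hJ23 : ⁅J 1, J 2⁆ = J 0) (hJ31 : ⁅J 2, J 0⁆ = J 1)
    (hJL : ∀ a b, ⁅J a, L b⁆ = 0) (hc : c * c = -1) :
    ⁅J 2 + c • L 2, J 0 + c • J 1⁆ = (-c) • (J 0 + c • J 1) := by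
  simp only [add_lie, lie_add, smul_lie, lie_smul, hJ31, ← lie_skew (L _) (J _), hJL,
    ← lie_skew (J 2) (J 1), hJ23]
  linear_combination (norm := module) hc • J 1

theorem lie_triangularSpan_gen₀_gen₂ (hL23 : ⁅L 1, L 2⁆ = L 0) (hL31 : ⁅L 2, L 0⁆ = L 1)
    (hJL : ∀ a b, ⁅J a, L b⁆ = 0) (hc : c * c = -1) :
    ⁅J 2 + c • L 2, L 0 + c • L 1⁆ = L 0 + c • L 1 := by
  simp only [add_lie, lie_add, smul_lie, lie_smul, hL31, hJL, ← lie_skew (L 2) (L 1), hL23]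
  linear_combination (norm := module) (-hc) • L 0

theorem lie_triangularSpan_gen₁_gen₂ (hJL : ∀ a b, ⁅J a, L b⁆ = 0) :
    ⁅J 0 + c • J 1, L 0 + c • L 1⁆ = 0 := by
  simp only [add_lie, lie_add, smul_lie, lie_smul, hJL, smul_zero, add_zero]

variable (hJ23 : ⁅J 1, J 2⁆ = J 0) (hJ31 : ⁅J 2, J 0⁆ = J 1)
  (hL23 : ⁅L 1, L 2⁆ = L 0) (hL31 : ⁅L 2, L 0⁆ = L 1)
  (hJL : ∀ a b, ⁅J a, L b⁆ = 0) (hc : c * c = -1)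
include hJ23 hJ31 hL23 hL31 hJL hc

theorem lie_mem_triangularSpan {x y : g} (hx : x ∈ triangularSpan J L c)
    (hy : y ∈ triangularSpan J L c) : ⁅x, y⁆ ∈ triangularSpan J L c :=
  lie_mem_span_triple (lie_triangularSpan_gen₀_gen₁ hJ23 hJ31 hJL hc)
    ((lie_triangularSpan_gen₀_gen₂ hL23 hL31 hJL hc).trans (one_smul R _).symm)
    (lie_triangularSpan_gen₁_gen₂ hJL) hx hy

theorem LieSubalgebra.isSolvable_of_toSubmodule_eq_triangularSpan {S : LieSubalgebra R g}
    (hS : S.toSubmodule = triangularSpan J L c) : LieAlgebra.IsSolvable S :=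
  isSolvable_of_toSubmodule_eq_span_triple (lie_triangularSpan_gen₀_gen₁ hJ23 hJ31 hJL hc)
    ((lie_triangularSpan_gen₀_gen₂ hL23 hL31 hJL hc).trans (one_smul R _).symm)
    (lie_triangularSpan_gen₁_gen₂ hJL) hS

end TriangularSpanLie

theorem sl2_sl2_double_decomposition_general {g : Type*} [LieRing g] [LieAlgebra ℂ g]
    (J L : Fin 3 → g)
    (hJ23 : ⁅J 1, J 2⁆ = J 0) (hJ31 : ⁅J 2, J 0⁆ = J 1)
    (hL23 : ⁅L 1, L 2⁆ = L 0) (hL31 : ⁅L 2, L 0⁆ = L 1)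
    (hJL : ∀ a b, ⁅J a, L b⁆ = 0)
    (hindep : LinearIndependent ℂ (Sum.elim J L))
    (hspan : Submodule.span ℂ (Set.range J ∪ Set.range L) = ⊤)
    (sp sm : Submodule ℂ g)
    (hsp : sp = Submodule.span ℂ
      {J 2 + Complex.I • L 2, J 0 + Complex.I • J 1, L 0 + Complex.I • L 1})
    (hsm : sm = Submodule.span ℂ
      {J 2 - Complex.I • L 2, J 0 - Complex.I • J 1, L 0 - Complex.I • L 1}) :
    (∀ x ∈ sp, ∀ y ∈ sp, ⁅x, y⁆ ∈ sp) ∧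
    (∀ x ∈ sm, ∀ y ∈ sm, ⁅x, y⁆ ∈ sm) ∧
    (∀ S : LieSubalgebra ℂ g, S.toSubmodule = sp → LieAlgebra.IsSolvable S) ∧
    (∀ S : LieSubalgebra ℂ g, S.toSubmodule = sm → LieAlgebra.IsSolvable S) ∧
    sp ⊓ sm = ⊥ ∧ sp ⊔ sm = ⊤ := by
  have hI : Complex.I * Complex.I = -1 := Complex.I_mul_I
  have hnegI : -Complex.I * -Complex.I = -1 := by rw [neg_mul_neg, hI]
  replace hsp : sp = triangularSpan J L Complex.I := hsp
  replace hsm : sm = triangularSpan J L (-Complex.I) := by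
    simp only [hsm, triangularSpan, neg_smul, ← sub_eq_add_neg]
  subst hsp hsm
  have hsup : triangularSpan J L Complex.I ⊔ triangularSpan J L (-Complex.I) = ⊤ :=
    top_unique <| hspan ▸
      span_range_union_le_triangularSpan_sup J L Complex.I_ne_zero two_ne_zero
  let b := Module.Basis.mk hindep (by rw [Set.Sum.elim_range, hspan])
  have : FiniteDimensional ℂ g := .of_basis b
  refine ⟨fun _ hx _ hy ↦ lie_mem_triangularSpan hJ23 hJ31 hL23 hL31 hJL hI hx hy,
    fun _ hx _ hy ↦ lie_mem_triangularSpan hJ23 hJ31 hL23 hL31 hJL hnegI hx hy,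
    fun _ ↦ LieSubalgebra.isSolvable_of_toSubmodule_eq_triangularSpan hJ23 hJ31 hL23 hL31 hJL hI,
    fun _ ↦ LieSubalgebra.isSolvable_of_toSubmodule_eq_triangularSpan hJ23 hJ31 hL23 hL31 hJL
      hnegI,
    inf_eq_bot_of_sup_eq_top hsup ?_, hsup⟩
  rw [Module.finrank_eq_card_basis b]
  exact (add_le_add (finrank_triangularSpan_le J L _) (finrank_triangularSpan_le J L _)).trans
    (by simp)

/-- in `sl(2,ℂ) ⊕ sl(2,ℂ)` with standard (so(3)-type) bases
`J₁,J₂,J₃` and `L₁,L₂,L₃` (`[J₁,J₂]=J₃` cyclically, similarly for `L`, `[J,L]=0`),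
the spans `s₊ = span{J₃ + iL₃, J₁ + iJ₂, L₁ + iL₂}` and
`s₋ = span{J₃ − iL₃, J₁ − iJ₂, L₁ − iL₂}` are solvable Lie subalgebras with
`s₊ ⊕ s₋ = sl(2,ℂ) ⊕ sl(2,ℂ)` as vector spaces. -/
theorem sl2_sl2_double_decomposition {g : Type*} [LieRing g] [LieAlgebra ℂ g]
    (J L : Fin 3 → g)
    (hJ12 : ⁅J 0, J 1⁆ = J 2) (hJ23 : ⁅J 1, J 2⁆ = J 0) (hJ31 : ⁅J 2, J 0⁆ = J 1)
    (hL12 : ⁅L 0, L 1⁆ = L 2) (hL23 : ⁅L 1, L 2⁆ = L 0) (hL31 : ⁅L 2, L 0⁆ = L 1)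
    (hJL : ∀ a b, ⁅J a, L b⁆ = 0)
    (hindep : LinearIndependent ℂ (Sum.elim J L))
    (hspan : Submodule.span ℂ (Set.range J ∪ Set.range L) = ⊤)
    (sp sm : Submodule ℂ g)
    (hsp : sp = Submodule.span ℂ
      {J 2 + Complex.I • L 2, J 0 + Complex.I • J 1, L 0 + Complex.I • L 1})
    (hsm : sm = Submodule.span ℂ
      {J 2 - Complex.I • L 2, J 0 - Complex.I • J 1, L 0 - Complex.I • L 1}) :
    (∀ x ∈ sp, ∀ y ∈ sp, ⁅x, y⁆ ∈ sp) ∧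
    (∀ x ∈ sm, ∀ y ∈ sm, ⁅x, y⁆ ∈ sm) ∧
    (∀ S : LieSubalgebra ℂ g, S.toSubmodule = sp → LieAlgebra.IsSolvable S) ∧
    (∀ S : LieSubalgebra ℂ g, S.toSubmodule = sm → LieAlgebra.IsSolvable S) ∧
    sp ⊓ sm = ⊥ ∧ sp ⊔ sm = ⊤ :=
  sl2_sl2_double_decomposition_general J L hJ23 hJ31 hL23 hL31 hJL hindep hspan sp sm hsp hsm
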